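/- If G is a chordal graph, then α(G) = Γ(G) = IR(G). -/

import Mathlib

open Finset

open scoped Classical

noncomputable section

namespace IndicatedDom

variable {V : Type*} [Fintype V]

/-- Closed neighborhood `N[v]` as a `Finset`. -/
def cnbhd (G : SimpleGraph V) (v : V) : Finset V :=
  insert v (G.neighborFinset v)

/-- `D` is a dominating set of `G`. -/
def Dominates (G : SimpleGraph V) (D : Finset V) : Prop :=
  ∀ u, ∃ v ∈ D, u ∈ cnbhd G v

/-- The set of vertices not dominated by `D`. -/
def undom (G : SimpleGraph V) (D : Finset V) : Finset V :=
  univ.filter fun u => ∀ v ∈ D, u ∉ cnbhd G v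

/-- Game value of the indicated domination game with a fuel parameter:
given the set `D` of vertices selected so far, Dominator indicates an
undominated vertex `u` (minimizing), Staller selects a vertex of `N[u]`
(maximizing); each selection counts one. -/
def giAux (G : SimpleGraph V) : ℕ → Finset V → ℕ
  | 0, _ => 0
  | (fuel+1), D =>
    if h : (undom G D).Nonempty then
      (undom G D).inf' h fun u =>
        (cnbhd G u).sup' ⟨u, Finset.mem_insert_self u _⟩ fun v => giAux G fuel (insert v D) + 1
    else 0

/-- The indicated domination number `γᵢ(G)`. -/
def indicatedDomNum (G : SimpleGraph V) : ℕ :=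
  giAux G (Fintype.card V) ∅

/-- Game value of the standard domination game with a fuel parameter:
`dom = true` means it is Dominator's turn (minimizing); legal moves are
vertices dominating at least one new vertex. -/
def gameAux (G : SimpleGraph V) : ℕ → Bool → Finset V → ℕ
  | 0, _, _ => 0
  | (fuel+1), dom, D =>
    if h : (univ.filter fun v => ∃ u ∈ cnbhd G v, u ∈ undom G D).Nonempty then
      if dom then
        (univ.filter fun v => ∃ u ∈ cnbhd G v, u ∈ undom G D).inf' h
          fun v => gameAux G fuel false (insert v D) + 1
      else
        (univ.filter fun v => ∃ u ∈ cnbhd G v, u ∈ undom G D).sup' h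
          fun v => gameAux G fuel true (insert v D) + 1
    else 0

/-- The game domination number `γ_g(G)` (Dominator starts). -/
def gameDomNum (G : SimpleGraph V) : ℕ :=
  gameAux G (Fintype.card V) true ∅

/-- A minimal dominating set. -/
def IsMinimalDominating (G : SimpleGraph V) (D : Finset V) : Prop :=
  Dominates G D ∧ ∀ D' ⊂ D, ¬ Dominates G D'

/-- The upper domination number `Γ(G)`. -/
def upperDomNum (G : SimpleGraph V) : ℕ :=
  sSup {k | ∃ D : Finset V, IsMinimalDominating G D ∧ D.card = k}

/-- A dominating (Grundy) sequence: every vertex dominates something new,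
and the whole sequence dominates `G`. -/
def IsDominatingSeq (G : SimpleGraph V) (l : List V) : Prop :=
  (∀ i : Fin l.length, ∃ u, u ∈ cnbhd G (l.get i) ∧
      ∀ j : Fin l.length, (j : ℕ) < (i : ℕ) → u ∉ cnbhd G (l.get j)) ∧
    Dominates G l.toFinset

/-- The Grundy domination number `γ_gr(G)`. -/
def grundyDomNum (G : SimpleGraph V) : ℕ :=
  sSup {k | ∃ l : List V, IsDominatingSeq G l ∧ l.length = k}

/-- The independence number `α(G)`. -/
def indepNum (G : SimpleGraph V) : ℕ :=
  sSup {k | ∃ S : Finset V, (∀ x ∈ S, ∀ y ∈ S, ¬ G.Adj x y) ∧ S.card = k}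

/-- `S` is irredundant: every `x ∈ S` has a private neighbor w.r.t. `S`. -/
def Irredundant (G : SimpleGraph V) (S : Finset V) : Prop :=
  ∀ x ∈ S, ∃ w, (∃ v ∈ S, w ∈ cnbhd G v) ∧ ¬ ∃ v ∈ S.erase x, w ∈ cnbhd G v

/-- The upper irredundance number `IR(G)`. -/
def upperIrredNum (G : SimpleGraph V) : ℕ :=
  sSup {k | ∃ S : Finset V, Irredundant G S ∧ (∀ T, S ⊂ T → ¬ Irredundant G T) ∧ S.card = k}

/-- The star `K_{1,n}` with center `0`. -/
def starGraph (n : ℕ) : SimpleGraph (Fin (n+1)) where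
  Adj a b := a ≠ b ∧ (a = 0 ∨ b = 0)
  symm := by constructor; intro a b h; exact ⟨h.1.symm, h.2.symm⟩
  loopless := by constructor; intro a h; exact h.1 rfl

/-- Two copies of `K_n` with a matching joining corresponding vertices of
index `≥ 1` (i.e. `K_n □ K₂` minus the matching edge at index `0`). -/
def Hgraph (n : ℕ) : SimpleGraph (Fin n × Bool) where
  Adj a b := (a.2 = b.2 ∧ a.1 ≠ b.1) ∨ (a.2 ≠ b.2 ∧ a.1 = b.1 ∧ (a.1 : ℕ) ≠ 0)
  symm := by
    constructor; rintro ⟨i, s⟩ ⟨j, t⟩ (⟨h1, h2⟩ | ⟨h1, h2, h3⟩)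
    · exact Or.inl ⟨h1.symm, h2.symm⟩
    · exact Or.inr ⟨h1.symm, h2.symm, h2 ▸ h3⟩
  loopless := by constructor; rintro ⟨i, s⟩ (⟨_, h⟩ | ⟨h, _⟩) <;> exact h rfl

/-- The `k`-th power of the path on `n` vertices: `i ~ j` iff `1 ≤ |i-j| ≤ k`. -/
def pathPow (n k : ℕ) : SimpleGraph (Fin n) where
  Adj i j := i ≠ j ∧ (i : ℕ) ≤ (j : ℕ) + k ∧ (j : ℕ) ≤ (i : ℕ) + k
  symm := by constructor; intro i j h; exact ⟨h.1.symm, h.2.2, h.2.1⟩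
  loopless := by constructor; intro i h; exact h.1 rfl

/-- The cycle on `m` vertices (for `m ≥ 3`), modeled on `ZMod m`. -/
def cyc (m : ℕ) : SimpleGraph (ZMod m) where
  Adj i j := i ≠ j ∧ (i + 1 = j ∨ j + 1 = i)
  symm := by constructor; intro i j h; exact ⟨h.1.symm, h.2.symm⟩
  loopless := by constructor; intro i h; exact h.1 rfl

/-- The graph `D₁`: a `9`-cycle `x₁x₂…x₉` plus chords `x₁x₃, x₄x₆, x₇x₉`
(vertex `xᵢ` is represented by `i - 1 : ZMod 9`). -/
def DGraph : SimpleGraph (ZMod 9) where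
  Adj i j := i ≠ j ∧ (i + 1 = j ∨ j + 1 = i ∨
    (i = 0 ∧ j = 2) ∨ (i = 2 ∧ j = 0) ∨ (i = 3 ∧ j = 5) ∨ (i = 5 ∧ j = 3) ∨
    (i = 6 ∧ j = 8) ∨ (i = 8 ∧ j = 6))
  symm := by constructor; intro i j h; refine ⟨h.1.symm, ?_⟩; tauto
  loopless := by constructor; intro i h; exact h.1 rfl

/-!
In every graph `α ≤ Γ ≤ IR`: a maximum independent set is a minimal dominating set, and a
minimal dominating set is a maximal irredundant set.

For `IR ≤ α` we use a perfect elimination order of the chordal graph, which exists by Dirac's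
lemma (minimal separators are cliques, so a chordal graph that is not complete has two
nonadjacent simplicial vertices). Given an irredundant set `S` with private neighbours `p x`,
keep for each `x ∈ S` whichever of `x` and `p x` comes earlier in the order. These `|S|` vertices
are pairwise nonadjacent: an edge between two of them would, through the clique formed by the
later neighbours of its earlier end, make some private neighbour `p x` adjacent to another
element of `S`.
-/

open SimpleGraph

section Chordal

omit [Fintype V]

variable {G : SimpleGraph V}

def IsChordal (G : SimpleGraph V) : Prop :=
  ∀ m : ℕ, 4 ≤ m → IsEmpty (cyc m ↪g G)

lemma cyc_adj_iff_of_val_lt {n : ℕ} [NeZero n] {z w : ZMod n} (h : z.val < w.val) :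
    (cyc n).Adj z w ↔ w.val = z.val + 1 ∨ (z.val = 0 ∧ w.val + 1 = n) := by
  have hw := ZMod.val_lt w
  have : Fact (1 < n) := ⟨by omega⟩
  have hsucc : ∀ x : ZMod n, (x + 1).val = (x.val + 1) % n := fun x => by
    rw [ZMod.val_add, ZMod.val_one]
  simp only [cyc, ← (ZMod.val_injective n).eq_iff, hsucc,
    Nat.mod_eq_of_lt (by omega : z.val + 1 < n)]
  have hzw : z ≠ w := fun hzw => (lt_irrefl _ (hzw ▸ h))
  simp only [ne_eq, hzw, not_false_eq_true, true_and]
  rcases (by omega : w.val + 1 < n ∨ w.val + 1 = n) with hlt | heq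
  · rw [Nat.mod_eq_of_lt hlt]; omega
  · rw [heq, Nat.mod_self]; omega

theorem IsChordal.false_of_inducedCycle (hG : IsChordal G) {n : ℕ} (hn : 4 ≤ n) (f : ℕ → V)
    (hinj : ∀ i j, i < j → j < n → f i ≠ f j)
    (hadj : ∀ i j, i < j → j < n → (G.Adj (f i) (f j) ↔ j = i + 1 ∨ (i = 0 ∧ j + 1 = n))) :
    False := by
  have : NeZero n := ⟨by omega⟩
  have key : ∀ z w : ZMod n, z.val < w.val → (G.Adj (f z.val) (f w.val) ↔ (cyc n).Adj z w) :=
    fun z w h => (hadj _ _ h (ZMod.val_lt w)).trans (cyc_adj_iff_of_val_lt h).symm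
  refine (hG n hn).false ⟨⟨fun z => f z.val, fun z w h => ?_⟩, fun {z w} => ?_⟩
  · rcases lt_trichotomy z.val w.val with hzw | hzw | hzw
    · exact absurd h (hinj _ _ hzw (ZMod.val_lt w))
    · exact ZMod.val_injective n hzw
    · exact absurd h.symm (hinj _ _ hzw (ZMod.val_lt z))
  · rcases lt_trichotomy z.val w.val with hzw | hzw | hzw
    · exact key z w hzw
    · simp [ZMod.val_injective n hzw]
    · rw [G.adj_comm, (cyc n).adj_comm]
      exact key w z hzw

def IsInducedPath (G : SimpleGraph V) (P : ℕ → V) (ℓ : ℕ) : Prop :=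
  ∀ i j, i < j → j ≤ ℓ → P i ≠ P j ∧ (G.Adj (P i) (P j) ↔ j = i + 1)

theorem IsChordal.le_one_of_isInducedPath (hG : IsChordal G) {P : ℕ → V} {ℓ : ℕ}
    (hP : IsInducedPath G P ℓ) {c : V} (h₀ : G.Adj (P 0) c) (hℓ : G.Adj (P ℓ) c)
    (hinner : ∀ i, 0 < i → i < ℓ → P i ≠ c ∧ ¬ G.Adj (P i) c) : ℓ ≤ 1 := by
  by_contra! hℓ₁
  refine hG.false_of_inducedCycle (n := ℓ + 2) (by omega) (fun i => if i ≤ ℓ then P i else c)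
    (fun i j hij hj => ?_) (fun i j hij hj => ?_)
  · by_cases hjℓ : j ≤ ℓ
    · simpa only [if_pos hjℓ, if_pos (hij.le.trans hjℓ)] using (hP i j hij hjℓ).1
    · simp only [if_neg hjℓ, if_pos (show i ≤ ℓ by omega)]
      rcases (by omega : i = 0 ∨ i = ℓ ∨ (0 < i ∧ i < ℓ)) with rfl | rfl | ⟨hi₀, hiℓ⟩
      · exact G.ne_of_adj h₀
      · exact G.ne_of_adj hℓ
      · exact (hinner i hi₀ hiℓ).1
  · by_cases hjℓ : j ≤ ℓ
    · simp only [if_pos hjℓ, if_pos (hij.le.trans hjℓ), (hP i j hij hjℓ).2]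
      omega
    · simp only [if_neg hjℓ, if_pos (show i ≤ ℓ by omega)]
      rcases (by omega : i = 0 ∨ i = ℓ ∨ (0 < i ∧ i < ℓ)) with rfl | rfl | ⟨hi₀, hiℓ⟩
      · simpa [h₀] using by omega
      · simpa [hℓ] using by omega
      · simp only [(hinner i hi₀ hiℓ).2, false_iff]
        omega

/-- `G.induce W` without leaving the vertex type `V`, so that sets `W` can vary freely. -/
def restrict (G : SimpleGraph V) (W : Set V) : SimpleGraph V where
  Adj x y := G.Adj x y ∧ x ∈ W ∧ y ∈ W
  symm := ⟨fun _ _ h => ⟨h.1.symm, h.2.2, h.2.1⟩⟩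
  loopless := ⟨fun x h => G.loopless.irrefl x h.1⟩

@[simp]
lemma restrict_adj {W : Set V} {x y : V} :
    (restrict G W).Adj x y ↔ G.Adj x y ∧ x ∈ W ∧ y ∈ W :=
  Iff.rfl

lemma restrict_mono {H : SimpleGraph V} {W W' : Set V} (hHG : H ≤ G) (hW : W ⊆ W') :
    restrict H W ≤ restrict G W' :=
  fun _ _ h => ⟨hHG h.1, hW h.2.1, hW h.2.2⟩

lemma restrict_le (W : Set V) : restrict G W ≤ G :=
  fun _ _ h => h.1

lemma mem_of_reachable_restrict {W : Set V} {x y : V} (h : (restrict G W).Reachable x y)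
    (hx : x ∈ W) : y ∈ W := by
  induction (reachable_iff_reflTransGen x y).1 h with
  | refl => exact hx
  | tail _ hyz => exact hyz.2.2

lemma reachable_restrict_setOf_reachable {b x y : V} (hx : G.Reachable b x)
    (hxy : G.Reachable x y) : (restrict G {z | G.Reachable b z}).Reachable x y := by
  induction (reachable_iff_reflTransGen x y).1 hxy with
  | refl => rfl
  | @tail y z hrel hyz ih =>
    have hxy := (reachable_iff_reflTransGen x y).2 hrel
    have hby := hx.trans hxy
    exact (ih hxy).trans (Adj.reachable ⟨hyz, hby, hby.trans hyz.reachable⟩)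

lemma getVert_mem_of_restrict {W : Set V} {s t : V} (ht : t ∈ W) (p : (restrict G W).Walk s t)
    (i : ℕ) : p.getVert i ∈ W := by
  rcases lt_or_ge i p.length with h | h
  · exact (p.adj_getVert_succ h).2.1
  · rw [p.getVert_of_length_le h]
    exact ht

/-- Along a shortest walk the distance from the start grows by one per step, so a chord would
give a shorter walk. -/
lemma isInducedPath_getVert_of_length_eq_dist {W : Set V} {s t : V} (ht : t ∈ W)
    (p : (restrict G W).Walk s t) (hp : p.length = (restrict G W).dist s t) :
    IsInducedPath G p.getVert p.length := by
  have hdist : ∀ i ≤ p.length, (restrict G W).dist s (p.getVert i) = i := fun i hi => by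
    rw [← length_eq_dist_of_subwalk hp (p.isSubwalk_take i), p.take_length]
    omega
  intro i j hij hj
  refine ⟨fun h => ?_, fun hadj => ?_, ?_⟩
  · have := hdist i (by omega)
    rw [h, hdist j hj] at this
    omega
  · have hH : (restrict G W).Adj (p.getVert i) (p.getVert j) :=
      ⟨hadj, getVert_mem_of_restrict ht p i, getVert_mem_of_restrict ht p j⟩
    have := dist_le ((p.take i).concat hH)
    rw [hdist j hj, Walk.length_concat, p.take_length] at this
    omega
  · rintro rfl
    exact (p.adj_getVert_succ (by omega)).1

def IsSimplicialIn (G : SimpleGraph V) (W : Set V) (v : V) : Prop :=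
  G.IsClique (W ∩ G.neighborSet v)

lemma IsSimplicialIn.mono {W W' : Set V} {v : V} (h : IsSimplicialIn G W v) (hW : W' ⊆ W) :
    IsSimplicialIn G W' v :=
  IsClique.subset (Set.inter_subset_inter_left _ hW) h

theorem IsChordal.adj_of_reachable_restrict (hG : IsChordal G) {C : Set V} {a s t : V}
    (hC : ∀ x ∈ C, x ≠ a ∧ ¬ G.Adj x a) (hsa : G.Adj s a) (hta : G.Adj t a) (hst : s ≠ t)
    (hreach : (restrict G (insert s (insert t C))).Reachable s t) : G.Adj s t := by
  by_contra hnadj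
  obtain ⟨p, hp⟩ := hreach.exists_walk_length_eq_dist
  have hP := isInducedPath_getVert_of_length_eq_dist (by simp) p hp
  have hlen : 1 < p.length := hp ▸ hreach.one_lt_dist_of_ne_of_not_adj hst (fun h => hnadj h.1)
  refine absurd (hG.le_one_of_isInducedPath hP ?_ ?_ fun i hi₀ hiℓ => hC _ ?_) hlen.not_ge
  · simpa using hsa
  · simpa using hta
  · have hi := getVert_mem_of_restrict (by simp) p i
    have hs := (hP 0 i hi₀ hiℓ.le).1
    have ht := (hP i p.length hiℓ le_rfl).1
    simp only [p.getVert_zero, p.getVert_length] at hs ht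
    simpa [Ne.symm hs, ht] using hi

/-- The vertices `S` adjacent to `a` and to the component `B` of `b` in `G[W] - N[a]` separate
`B` from `a`; chordality makes `S` a clique. -/
theorem IsChordal.exists_isClique_separator (hG : IsChordal G) {W : Set V} {a b : V} (hb : b ∈ W)
    (hab : a ≠ b) (hnadj : ¬ G.Adj a b) :
    ∃ B S : Set V, b ∈ B ∧ B ⊆ W ∧ S ⊆ W ∧ a ∉ B ∧ a ∉ S ∧ Disjoint B S ∧ G.IsClique S ∧
      ∀ x ∈ B, W ∩ G.neighborSet x ⊆ B ∪ S := by
  set U : Set V := {x | x ∈ W ∧ x ≠ a ∧ ¬ G.Adj a x}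
  set B := {x | (restrict G U).Reachable b x}
  have hB : ∀ x ∈ B, x ∈ W ∧ x ≠ a ∧ ¬ G.Adj a x := fun x hx =>
    mem_of_reachable_restrict (W := U) hx ⟨hb, hab.symm, hnadj⟩
  refine ⟨B, {s | s ∈ W ∧ G.Adj a s ∧ ∃ y ∈ B, G.Adj s y}, Reachable.rfl, fun x hx => (hB x hx).1,
    fun s hs => hs.1, fun ha => (hB a ha).2.1 rfl, fun ha => G.loopless.irrefl a ha.2.1,
    Set.disjoint_left.2 fun x hxB hxS => (hB x hxB).2.2 hxS.2.1, ?_, ?_⟩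
  · rintro s ⟨-, has, bs, hbs, hsbs⟩ t ⟨-, hat, bt, hbt, htbt⟩ hst
    refine hG.adj_of_reachable_restrict (fun x hx => ⟨(hB x hx).2.1, fun h => (hB x hx).2.2 h.symm⟩)
      has.symm hat.symm hst ?_
    have hbsbt : (restrict G (insert s (insert t B))).Reachable bs bt :=
      (reachable_restrict_setOf_reachable hbs (hbs.symm.trans hbt)).mono
        (restrict_mono (restrict_le _) fun x hx => Or.inr (Or.inr hx))
    have hsbs' : (restrict G (insert s (insert t B))).Adj s bs := ⟨hsbs, by simp, by simp [hbs]⟩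
    have hbtt : (restrict G (insert s (insert t B))).Adj bt t := ⟨htbt.symm, by simp [hbt], by simp⟩
    exact hsbs'.reachable.trans (hbsbt.trans hbtt.reachable)
  · rintro x hx y ⟨hyW, hxy⟩
    by_cases hay : G.Adj a y
    · exact Or.inr ⟨hyW, hay, x, hx, hxy.symm⟩
    · have hya : y ≠ a := by
        rintro rfl
        exact (hB x hx).2.2 hxy.symm
      exact Or.inl (hx.trans (Adj.reachable ⟨hxy, hB x hx, hyW, hya, hay⟩))

lemma exists_isSimplicialIn_of_subset_union {W X S : Set V} (hS : G.IsClique S) {x : V}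
    (hx : x ∈ X) (hX : ∀ v ∈ X, W ∩ G.neighborSet v ⊆ X ∪ S)
    (hXS : G.IsClique (X ∪ S) ∨ ∃ v ∈ X ∪ S, ∃ w ∈ X ∪ S, v ≠ w ∧ ¬ G.Adj v w ∧
      IsSimplicialIn G (X ∪ S) v ∧ IsSimplicialIn G (X ∪ S) w) :
    ∃ v ∈ X, IsSimplicialIn G W v := by
  have lift : ∀ v ∈ X, IsSimplicialIn G (X ∪ S) v → IsSimplicialIn G W v := fun v hv h =>
    IsClique.subset (Set.subset_inter (hX v hv) Set.inter_subset_right) h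
  rcases hXS with hcl | ⟨v, hv, w, hw, hvw, hnadj, hsv, hsw⟩
  · exact ⟨x, hx, lift x hx (hcl.subset Set.inter_subset_left)⟩
  by_cases hvX : v ∈ X
  · exact ⟨v, hvX, lift v hvX hsv⟩
  by_cases hwX : w ∈ X
  · exact ⟨w, hwX, lift w hwX hsw⟩
  exact absurd (hS (hv.resolve_left hvX) (hw.resolve_left hwX) hvw) hnadj

theorem IsChordal.isClique_or_exists_isSimplicialIn [Finite V] (hG : IsChordal G) (W : Set V) :
    G.IsClique W ∨ ∃ v ∈ W, ∃ w ∈ W, v ≠ w ∧ ¬ G.Adj v w ∧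
      IsSimplicialIn G W v ∧ IsSimplicialIn G W w := by
  induction W using WellFoundedLT.induction with
  | _ W ih =>
  by_cases hW : G.IsClique W
  · exact Or.inl hW
  obtain ⟨a, ha, b, hb, hab, hnadj⟩ : ∃ a ∈ W, ∃ b ∈ W, a ≠ b ∧ ¬ G.Adj a b := by
    simpa [IsClique, Set.Pairwise] using hW
  obtain ⟨B, S, hbB, hBW, hSW, haB, haS, hBS, hS, hB⟩ := hG.exists_isClique_separator hb hab hnadj
  set A := W \ (B ∪ S)
  have hA : ∀ v ∈ A, W ∩ G.neighborSet v ⊆ A ∪ S := by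
    rintro v ⟨hvW, hvBS⟩ y ⟨hyW, hvy⟩
    have hyB : y ∉ B := fun hyB => hvBS (hB y hyB ⟨hvW, hvy.symm⟩)
    by_cases hyS : y ∈ S
    · exact Or.inr hyS
    · exact Or.inl ⟨hyW, by simp [hyB, hyS]⟩
  have hAS : A ∪ S ⊂ W := (Set.ssubset_iff_of_subset (Set.union_subset Set.sdiff_subset hSW)).2
    ⟨b, hb, by simp [hbB, Set.disjoint_left.1 hBS hbB]⟩
  have hBS' : B ∪ S ⊂ W := (Set.ssubset_iff_of_subset (Set.union_subset hBW hSW)).2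
    ⟨a, ha, by simp [haB, haS]⟩
  have haA : a ∈ A := ⟨ha, by simp [haB, haS]⟩
  obtain ⟨vA, hvA, hsA⟩ := exists_isSimplicialIn_of_subset_union hS haA hA (ih _ hAS)
  obtain ⟨vB, hvB, hsB⟩ := exists_isSimplicialIn_of_subset_union hS hbB hB (ih _ hBS')
  refine Or.inr ⟨vA, hvA.1, vB, hBW hvB, fun h => hvA.2 (Or.inl (h ▸ hvB)), fun h => ?_, hsA, hsB⟩
  exact hvA.2 (hB vB hvB ⟨hvA.1, h.symm⟩)

theorem IsChordal.exists_isSimplicialIn [Finite V] (hG : IsChordal G) {W : Set V}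
    (hW : W.Nonempty) :
    ∃ v ∈ W, IsSimplicialIn G W v := by
  rcases hG.isClique_or_exists_isSimplicialIn W with hcl | ⟨v, hv, -, -, -, -, hsv, -⟩
  · obtain ⟨v, hv⟩ := hW
    exact ⟨v, hv, hcl.subset Set.inter_subset_left⟩
  · exact ⟨v, hv, hsv⟩

def IsPerfectEliminationOrder (G : SimpleGraph V) (rank : V → ℕ) : Prop :=
  Function.Injective rank ∧ ∀ v, IsSimplicialIn G {x | rank v < rank x} v

lemma IsPerfectEliminationOrder.adj {rank : V → ℕ} (hρ : IsPerfectEliminationOrder G rank)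
    {v x y : V} (hx : G.Adj v x) (hy : G.Adj v y) (hvx : rank v < rank x) (hvy : rank v < rank y)
    (hxy : x ≠ y) : G.Adj x y :=
  hρ.2 v ⟨hvx, hx⟩ ⟨hvy, hy⟩ hxy

lemma IsChordal.exists_rank_isSimplicialIn [Finite V] (hG : IsChordal G) (W : Set V) :
    ∃ rank : V → ℕ, Set.InjOn rank W ∧
      ∀ v ∈ W, IsSimplicialIn G {x | x ∈ W ∧ rank v < rank x} v := by
  induction W using WellFoundedLT.induction with
  | _ W ih =>
  rcases W.eq_empty_or_nonempty with rfl | hW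
  · exact ⟨fun _ => 0, Set.injOn_empty _, fun v hv => hv.elim⟩
  obtain ⟨v, hv, hsv⟩ := hG.exists_isSimplicialIn hW
  obtain ⟨rank, hinj, hsimp⟩ := ih (W \ {v}) (Set.sdiff_singleton_ssubset.2 hv)
  refine ⟨fun x => if x = v then 0 else rank x + 1, fun x hx y hy hxy => ?_, fun u hu => ?_⟩
  · by_cases hxv : x = v <;> by_cases hyv : y = v <;> simp only [hxv, hyv, if_true, if_false] at hxy
    · rw [hxv, hyv]
    · omega
    · omega
    · exact hinj ⟨hx, hxv⟩ ⟨hy, hyv⟩ (by omega)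
  by_cases huv : u = v
  · subst huv
    exact hsv.mono fun x hx => hx.1
  refine (hsimp u ⟨hu, huv⟩).mono ?_
  rintro x ⟨hxW, hx⟩
  have hxv : x ≠ v := by
    rintro rfl
    simp [huv] at hx
  simp only [if_neg huv, if_neg hxv] at hx
  exact ⟨⟨hxW, hxv⟩, by omega⟩

theorem IsChordal.exists_isPerfectEliminationOrder [Finite V] (hG : IsChordal G) :
    ∃ rank, IsPerfectEliminationOrder G rank := by
  obtain ⟨rank, hinj, hsimp⟩ := hG.exists_rank_isSimplicialIn Set.univ
  exact ⟨rank, Set.injOn_univ.1 hinj, fun v => by simpa using hsimp v (Set.mem_univ v)⟩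

end Chordal

section Domination

variable {G : SimpleGraph V}

lemma mem_cnbhd {u v : V} : u ∈ cnbhd G v ↔ u = v ∨ G.Adj v u := by
  simp [cnbhd]

lemma bddAbove_of_card {s : Set ℕ} (h : ∀ k ∈ s, ∃ S : Finset V, S.card = k) : BddAbove s :=
  ⟨Fintype.card V, fun k hk => by
    obtain ⟨S, rfl⟩ := h k hk
    exact S.card_le_univ⟩

lemma card_le_indepNum {S : Finset V} (hS : ∀ x ∈ S, ∀ y ∈ S, ¬ G.Adj x y) :
    S.card ≤ indepNum G :=
  le_csSup (bddAbove_of_card (by rintro _ ⟨S, -, hS⟩; exact ⟨S, hS⟩)) ⟨S, hS, rfl⟩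

lemma exists_card_eq_indepNum (G : SimpleGraph V) :
    ∃ S : Finset V, (∀ x ∈ S, ∀ y ∈ S, ¬ G.Adj x y) ∧ S.card = indepNum G := by
  show indepNum G ∈ {k | ∃ S : Finset V, (∀ x ∈ S, ∀ y ∈ S, ¬ G.Adj x y) ∧ S.card = k}
  exact Nat.sSup_mem ⟨0, ∅, by simp, rfl⟩ (bddAbove_of_card (by rintro _ ⟨S, -, hS⟩; exact ⟨S, hS⟩))

lemma dominates_of_card_eq_indepNum {S : Finset V} (hS : ∀ x ∈ S, ∀ y ∈ S, ¬ G.Adj x y)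
    (hcard : S.card = indepNum G) : Dominates G S := by
  intro u
  by_cases hu : u ∈ S
  · exact ⟨u, hu, mem_cnbhd.2 (Or.inl rfl)⟩
  by_contra! hdom
  have hindep : ∀ x ∈ insert u S, ∀ y ∈ insert u S, ¬ G.Adj x y := by
    simp only [Finset.mem_insert]
    rintro x (rfl | hx) y (rfl | hy) hxy
    · exact G.loopless.irrefl _ hxy
    · exact hdom y hy (mem_cnbhd.2 (Or.inr hxy.symm))
    · exact hdom x hx (mem_cnbhd.2 (Or.inr hxy))
    · exact hS x hx y hy hxy
  have := card_le_indepNum hindep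
  rw [Finset.card_insert_of_notMem hu] at this
  omega

lemma Dominates.isMinimalDominating {S : Finset V} (hdom : Dominates G S)
    (hS : ∀ x ∈ S, ∀ y ∈ S, ¬ G.Adj x y) : IsMinimalDominating G S := by
  refine ⟨hdom, fun D hD hD' => ?_⟩
  obtain ⟨x, hxS, hxD⟩ := Finset.exists_of_ssubset hD
  obtain ⟨v, hvD, hxv⟩ := hD' x
  rcases mem_cnbhd.1 hxv with rfl | hvx
  · exact hxD hvD
  · exact hS v (hD.subset hvD) x hxS hvx

theorem indepNum_le_upperDomNum (G : SimpleGraph V) : indepNum G ≤ upperDomNum G := by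
  obtain ⟨S, hS, hcard⟩ := exists_card_eq_indepNum G
  rw [← hcard]
  exact le_csSup (bddAbove_of_card (by rintro _ ⟨D, -, hD⟩; exact ⟨D, hD⟩))
    ⟨S, (dominates_of_card_eq_indepNum hS hcard).isMinimalDominating hS, rfl⟩

lemma IsMinimalDominating.irredundant {D : Finset V} (hD : IsMinimalDominating G D) :
    Irredundant G D := by
  intro x hx
  obtain ⟨u, hu⟩ : ∃ u, ∀ v ∈ D.erase x, u ∉ cnbhd G v := by
    simpa [Dominates] using hD.2 _ (Finset.erase_ssubset hx)
  exact ⟨u, hD.1 u, fun ⟨v, hv, huv⟩ => hu v hv huv⟩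

lemma Dominates.not_irredundant_of_ssubset {D T : Finset V} (hD : Dominates G D) (hT : D ⊂ T) :
    ¬ Irredundant G T := by
  intro hirr
  obtain ⟨x, hxT, hxD⟩ := Finset.exists_of_ssubset hT
  obtain ⟨w, -, hpriv⟩ := hirr x hxT
  obtain ⟨v, hvD, hwv⟩ := hD w
  exact hpriv ⟨v, Finset.mem_erase.2 ⟨fun h => hxD (h ▸ hvD), hT.subset hvD⟩, hwv⟩

theorem upperDomNum_le_upperIrredNum (G : SimpleGraph V) : upperDomNum G ≤ upperIrredNum G :=
  csSup_le' fun _ ⟨D, hD, hcard⟩ =>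
    hcard ▸ le_csSup (bddAbove_of_card (by rintro _ ⟨S, -, -, hS⟩; exact ⟨S, hS⟩))
      ⟨D, hD.irredundant, fun _ hT => hD.1.not_irredundant_of_ssubset hT, rfl⟩

def IsPrivateNeighborMap (G : SimpleGraph V) (S : Finset V) (p : V → V) : Prop :=
  ∀ x ∈ S, ∀ y ∈ S, p x ∈ cnbhd G y ↔ x = y

lemma Irredundant.exists_isPrivateNeighborMap {S : Finset V} (hS : Irredundant G S) :
    ∃ p, IsPrivateNeighborMap G S p := by
  have h : ∀ x ∈ S, ∃ w, ∀ y ∈ S, w ∈ cnbhd G y ↔ x = y := by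
    intro x hx
    obtain ⟨w, ⟨v, hv, hwv⟩, hpriv⟩ := hS x hx
    have hnot : ∀ y ∈ S, y ≠ x → w ∉ cnbhd G y := fun y hy hyx hw =>
      hpriv ⟨y, Finset.mem_erase.2 ⟨hyx, hy⟩, hw⟩
    have hvx : v = x := by
      by_contra hvx
      exact hnot v hv hvx hwv
    refine ⟨w, fun y hy => ⟨fun hw => ?_, fun hxy => hxy ▸ hvx ▸ hwv⟩⟩
    by_contra hxy
    exact hnot y hy (Ne.symm hxy) hw
  choose! p hp using h
  exact ⟨p, hp⟩

lemma IsPrivateNeighborMap.eq_or_adj {S : Finset V} {p : V → V} (hp : IsPrivateNeighborMap G S p)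
    {x : V} (hx : x ∈ S) : p x = x ∨ G.Adj x (p x) :=
  mem_cnbhd.1 ((hp x hx x hx).2 rfl)

lemma IsPrivateNeighborMap.ne_and_not_adj {S : Finset V} {p : V → V}
    (hp : IsPrivateNeighborMap G S p) {x y : V} (hx : x ∈ S) (hy : y ∈ S) (hxy : x ≠ y) :
    p x ≠ y ∧ ¬ G.Adj y (p x) := by
  simpa [mem_cnbhd, not_or] using (hp x hx y hy).not.2 hxy

def earlier (rank : V → ℕ) (x y : V) : V :=
  if rank x < rank y then x else y

section EliminationOrder

variable {rank : V → ℕ} {S : Finset V} {p : V → V}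

lemma IsPerfectEliminationOrder.not_adj_earlier (hρ : IsPerfectEliminationOrder G rank)
    (hp : IsPrivateNeighborMap G S p) {x y : V} (hx : x ∈ S) (hy : y ∈ S) (hxy : x ≠ y)
    (hlt : rank (earlier rank x (p x)) < rank (earlier rank y (p y))) :
    ¬ G.Adj (earlier rank x (p x)) (earlier rank y (p y)) := by
  intro hadj
  have hxy' := hp.ne_and_not_adj hx hy hxy
  have hyx' := hp.ne_and_not_adj hy hx hxy.symm
  simp only [earlier] at hlt hadj
  split_ifs at hlt hadj with hkx hky hky
  · have hxpx := (hp.eq_or_adj hx).resolve_left fun h => by rw [h] at hkx; omega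
    exact hxy'.2 (hρ.adj hadj hxpx hlt hkx hxy'.1.symm)
  · exact hyx'.2 hadj
  · exact hxy'.2 hadj.symm
  · have hpx : p x ≠ x := fun h => hyx'.2 (by rwa [h] at hadj)
    have hxpx := (hp.eq_or_adj hx).resolve_left hpx
    have hrank : rank (p x) < rank x := lt_of_le_of_ne (not_lt.1 hkx) fun h => hpx (hρ.1 h)
    exact hyx'.2 (hρ.adj hxpx.symm hadj hrank hlt hyx'.1.symm)

lemma IsPrivateNeighborMap.injOn_earlier (hp : IsPrivateNeighborMap G S p) :
    Set.InjOn (fun x => earlier rank x (p x)) S := by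
  intro x hx y hy hxy
  by_contra hne
  simp only [earlier] at hxy
  split_ifs at hxy
  · exact hne hxy
  · exact (hp.ne_and_not_adj hy hx (Ne.symm hne)).1 hxy.symm
  · exact (hp.ne_and_not_adj hx hy hne).1 hxy
  · exact hne ((hp x hx y hy).1 (hxy ▸ (hp y hy y hy).2 rfl))

theorem IsPerfectEliminationOrder.exists_indep_card_eq (hρ : IsPerfectEliminationOrder G rank)
    (hp : IsPrivateNeighborMap G S p) :
    ∃ I : Finset V, (∀ x ∈ I, ∀ y ∈ I, ¬ G.Adj x y) ∧ I.card = S.card := by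
  refine ⟨S.image fun x => earlier rank x (p x), ?_, Finset.card_image_of_injOn hp.injOn_earlier⟩
  simp only [Finset.mem_image]
  rintro _ ⟨x, hx, rfl⟩ _ ⟨y, hy, rfl⟩ hadj
  have hxy : x ≠ y := by
    rintro rfl
    exact G.loopless.irrefl _ hadj
  have hne : rank (earlier rank x (p x)) ≠ rank (earlier rank y (p y)) := fun h =>
    hxy (hp.injOn_earlier hx hy (hρ.1 h))
  rcases lt_or_gt_of_ne hne with h | h
  · exact hρ.not_adj_earlier hp hx hy hxy h hadj
  · exact hρ.not_adj_earlier hp hy hx hxy.symm h hadj.symm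

end EliminationOrder

theorem IsChordal.upperIrredNum_le_indepNum (hG : IsChordal G) : upperIrredNum G ≤ indepNum G := by
  obtain ⟨rank, hρ⟩ := hG.exists_isPerfectEliminationOrder
  refine csSup_le' fun _ ⟨S, hS, _, hcard⟩ => ?_
  obtain ⟨p, hp⟩ := hS.exists_isPrivateNeighborMap
  obtain ⟨I, hI, hIcard⟩ := hρ.exists_indep_card_eq hp
  exact hcard ▸ hIcard ▸ card_le_indepNum hI

end Domination

/-- if `G` is chordal (no induced cycle of length at least 4),
then `α(G) = Γ(G) = IR(G)`. -/
theorem stmt17 {V : Type*} [Fintype V] (G : SimpleGraph V)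
    (hchordal : ∀ m : ℕ, 4 ≤ m → IsEmpty (cyc m ↪g G)) :
    indepNum G = upperDomNum G ∧ upperDomNum G = upperIrredNum G := by
  have hαΓ := indepNum_le_upperDomNum G
  have hΓIR := upperDomNum_le_upperIrredNum G
  have hIRα := IsChordal.upperIrredNum_le_indepNum hchordal
  exact ⟨hαΓ.antisymm (hΓIR.trans hIRα), hΓIR.antisymm (hIRα.trans hαΓ)⟩

end IndicatedDom
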